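/- In the oriented graph (𝒞, ↦) on the clusters of the cumulatively merged partition: (i) if C ↦ C' then ⌊r(C)^α⌋ > ⌊r(C')^α⌋, where ⌊·⌋ is the integer part; (ii) there is no infinite oriented path C₁ ↦ C₂ ↦ ⋯ (in particular there is no oriented cycle), and every oriented path starting from a cluster C with |C| < ∞ has length at most ⌊r(C)^α⌋. -/

import Mathlib

open scoped ENNReal NNReal
open MeasureTheory

namespace CMPPaper

variable {V : Type*}

/-- Graph distance between two subsets of vertices, valued in `ℝ≥0∞`
(`⊤` when one of the sets is empty). -/
noncomputable def setDist (G : SimpleGraph V) (A B : Set V) : ℝ≥0∞ :=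
  ⨅ (x : A) (y : B), (G.dist x.1 y.1 : ℝ≥0∞)

/-- Total weight `r(A) = Σ_{x ∈ A} r(x) ∈ [0,∞]` of a set of vertices. -/
noncomputable def wt (r : V → ℝ≥0) (A : Set V) : ℝ≥0∞ :=
  ∑' x : A, (r x.1 : ℝ≥0∞)

/-- A partition (encoded as a setoid) of the vertex set is `(r,α)`-admissible if any two
distinct clusters `C ≠ C'` satisfy `d(C,C') > min(r(C), r(C'))^α`. -/
def Admissible (G : SimpleGraph V) (r : V → ℝ≥0) (α : ℝ) (s : Setoid V) : Prop :=
  ∀ C ∈ s.classes, ∀ C' ∈ s.classes, C ≠ C' →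
    (min (wt r C) (wt r C')) ^ α < setDist G C C'

/-- The cumulatively merged partition: the finest `(r,α)`-admissible partition, i.e. the
intersection (infimum as setoids) of all `(r,α)`-admissible partitions. -/
noncomputable def CMP (G : SimpleGraph V) (r : V → ℝ≥0) (α : ℝ) : Setoid V :=
  sInf {s : Setoid V | Admissible G r α s}

/-- The cluster of the CMP containing `x`. -/
def cluster (G : SimpleGraph V) (r : V → ℝ≥0) (α : ℝ) (x : V) : Set V :=
  {y | (CMP G r α) x y}

/-- The ball `B(A, l) = {z : d(z,A) ≤ l}` around a set of vertices. -/
def ballSet (G : SimpleGraph V) (A : Set V) (l : ℝ≥0∞) : Set V :=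
  {z | ∃ a ∈ A, (G.dist z a : ℝ≥0∞) ≤ l}

/-- A subset `H` of the vertices is stable if every cluster `C` of the CMP of the induced
subgraph on `H` (with the restricted weights) satisfies `B(C, r(C)^α) ⊆ H`. -/
def IsStable (G : SimpleGraph V) (r : V → ℝ≥0) (α : ℝ) (H : Set V) : Prop :=
  ∀ C ∈ (CMP (G.induce H) (fun x : H => r x) α).classes,
    ballSet G (Subtype.val '' C) ((wt (fun x : H => r x) C) ^ α) ⊆ H

/-- The stabiliser of `W`: the smallest stable set containing `W`, i.e. the intersection of
all stable sets containing `W`. -/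
def stabiliser (G : SimpleGraph V) (r : V → ℝ≥0) (α : ℝ) (W : Set V) : Set V :=
  ⋂₀ {H : Set V | IsStable G r α H ∧ W ⊆ H}

open Classical in
/-- The merging operator `M_{x,y}`: if the clusters of `x` and `y` are distinct and
`d(x,y) ≤ min(r(𝒞_x), r(𝒞_y))^α`, merge them (take the smallest coarsening of `s`
relating `x` and `y`); otherwise leave the partition unchanged. -/
noncomputable def mergeOp (G : SimpleGraph V) (r : V → ℝ≥0) (α : ℝ) (x y : V)
    (s : Setoid V) : Setoid V :=
  if ¬ s x y ∧ (G.dist x y : ℝ≥0∞) ≤ (min (wt r {u | s x u}) (wt r {u | s y u})) ^ α then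
    sInf {t : Setoid V | s ≤ t ∧ t x y}
  else s

/-- The relation `C ↦ C'` (`C'` descends from `C`) on clusters of the CMP. -/
def Descends (G : SimpleGraph V) (r : V → ℝ≥0) (α : ℝ) (C C' : Set V) : Prop :=
  C ∈ (CMP G r α).classes ∧ C' ∈ (CMP G r α).classes ∧ C ≠ C' ∧
    setDist G C C' ≤ (wt r C) ^ α

/-- Integer part of an extended nonnegative real, valued in `ℕ∞`. -/
noncomputable def efloor (x : ℝ≥0∞) : ℕ∞ :=
  if x = ⊤ then ⊤ else (⌊x.toReal⌋₊ : ℕ∞)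

/-- The bound `max(w log₂ w / 2, 0)` (for `α = 1`), resp. `w^α/(2^α-2)` (for `α ≠ 1`),
on the diameter of a cluster of total weight `w`. -/
noncomputable def diamBound (α : ℝ) (w : ℝ≥0∞) : ℝ≥0∞ :=
  if α = 1 then
    (if w = ⊤ then ⊤ else ENNReal.ofReal (max (w.toReal * Real.logb 2 w.toReal / 2) 0))
  else w ^ α / ((2 : ℝ≥0∞) ^ α - 2)

/-- The relation `C →η C'` on clusters of the CMP:  `d(C,C') ≤ η·r(C)^α`. -/
def EtaDesc (G : SimpleGraph V) (r : V → ℝ≥0) (α η : ℝ) (C C' : Set V) : Prop :=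
  C ∈ (CMP G r α).classes ∧ C' ∈ (CMP G r α).classes ∧ C ≠ C' ∧
    setDist G C C' ≤ ENNReal.ofReal η * (wt r C) ^ α

/-- The `η`-stabiliser of a vertex `x`: the union of `𝒞_x` together with all clusters
reachable from `𝒞_x` by a finite oriented path for the relation `→η`. -/
def etaStab (G : SimpleGraph V) (r : V → ℝ≥0) (α η : ℝ) (x : V) : Set V :=
  ⋃₀ {C' | Relation.ReflTransGen (EtaDesc G r α η) (cluster G r α x) C'}

/-- The path graph on `ℕ`: `m` and `m+1` are adjacent. -/
def pathGraphN : SimpleGraph ℕ := SimpleGraph.fromRel (fun m n => n = m + 1)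

/-- The two-sided path graph on `ℤ`: `k` and `k+1` are adjacent. -/
def pathGraphZ : SimpleGraph ℤ := SimpleGraph.fromRel (fun a b => b = a + 1)

/-- The hypercubic lattice `ℤ^d`: `x` and `y` are adjacent iff `‖x-y‖₁ = 1`. -/
def latticeGraph (d : ℕ) : SimpleGraph (Fin d → ℤ) :=
  SimpleGraph.fromRel (fun x y => (∑ i, |x i - y i|) = 1)

/-- The CMP of the weighted graph `(G, r)` with expansion exponent `α` has an
infinite cluster. -/
def HasInfiniteCluster (G : SimpleGraph V) (r : V → ℝ≥0) (α : ℝ) : Prop :=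
  ∃ C ∈ (CMP G r α).classes, C.Infinite

/-- `w` is an i.i.d. family of Bernoulli(`p`) weights indexed by `V`, under the
probability measure `μ`. -/
def IsBernoulliField {Ω : Type*} [MeasurableSpace Ω] (μ : Measure Ω)
    (p : ℝ) (w : Ω → V → ℝ≥0) : Prop :=
  (∀ x : V, Measurable fun ω => w ω x) ∧
  (∀ ω x, w ω x = 0 ∨ w ω x = 1) ∧
  (∀ x : V, μ {ω | w ω x = 1} = ENNReal.ofReal p) ∧
  ProbabilityTheory.iIndepFun (fun x ω => w ω x) μ

/-- `w` is an i.i.d. family of weights indexed by `V`, each with law `ν`, under the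
probability measure `μ`. -/
def IsIIDField {Ω : Type*} [MeasurableSpace Ω] (μ : Measure Ω)
    (ν : Measure ℝ≥0) (w : Ω → V → ℝ≥0) : Prop :=
  (∀ x : V, Measurable fun ω => w ω x) ∧
  (∀ x : V, μ.map (fun ω => w ω x) = ν) ∧
  ProbabilityTheory.iIndepFun (fun x ω => w ω x) μ

/-!
The finest admissible partition is itself admissible. Hence if `C ↦ C'`, then
`r(C')^α < d(C, C') ≤ r(C)^α` (the minimum in the admissibility condition cannot be `r(C)`),
and since `d(C, C')` is an integer, `⌊r(C)^α⌋` drops by at least one along each arrow.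
Every other claim follows from the well-foundedness of `ℕ∞`.
-/

lemma natCast_le_of_succ_lt :
    ∀ {n : ℕ} {f : ℕ → ℕ∞}, (∀ i < n, f (i + 1) < f i) → (n : ℕ∞) ≤ f 0
  | 0, _, _ => by simp
  | n + 1, f, h => by
    have ih : (n : ℕ∞) ≤ f 1 :=
      natCast_le_of_succ_lt (f := fun i => f (i + 1)) fun i hi => h (i + 1) (by omega)
    calc ((n + 1 : ℕ) : ℕ∞) = n + 1 := by push_cast; rfl
      _ ≤ f 1 + 1 := by gcongr
      _ ≤ f 0 := Order.add_one_le_of_lt (h 0 (by omega))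

lemma efloor_lt_efloor_of_lt_natCast_le {x y : ℝ≥0∞} {N : ℕ} (hx : x < N) (hy : (N : ℝ≥0∞) ≤ y) :
    efloor x < efloor y := by
  have hx_top : x ≠ ⊤ := hx.ne_top
  have hfloor_x : efloor x < N := by
    rw [efloor, if_neg hx_top, Nat.cast_lt, Nat.floor_lt ENNReal.toReal_nonneg]
    exact_mod_cast (ENNReal.toReal_lt_toReal hx_top (ENNReal.natCast_ne_top N)).2 hx
  have hfloor_y : (N : ℕ∞) ≤ efloor y := by
    unfold efloor
    split_ifs with hy_top
    · exact le_top
    · rw [Nat.cast_le, Nat.le_floor_iff ENNReal.toReal_nonneg]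
      exact_mod_cast ENNReal.toReal_mono hy_top hy
  exact hfloor_x.trans_le hfloor_y

section

variable (G : SimpleGraph V) (r : V → ℝ≥0) (α : ℝ)

lemma wt_mono {A B : Set V} (h : A ⊆ B) : wt r A ≤ wt r B :=
  ENNReal.tsum_mono_subtype (fun x => (r x : ℝ≥0∞)) h

lemma setDist_anti {A B A' B' : Set V} (hA : A ⊆ A') (hB : B ⊆ B') :
    setDist G A' B' ≤ setDist G A B :=
  le_iInf₂ fun x y => iInf₂_le (f := fun (a : A') (b : B') => (G.dist a.1 b.1 : ℝ≥0∞))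
    ⟨x, hA x.2⟩ ⟨y, hB y.2⟩

lemma setDist_eq_natCast {A B : Set V} (hA : A.Nonempty) (hB : B.Nonempty) :
    ∃ N : ℕ, setDist G A B = N := by
  have : Nonempty (A × B) := ⟨(⟨_, hA.some_mem⟩, ⟨_, hB.some_mem⟩)⟩
  set p := Function.argmin fun p : A × B => G.dist p.1.1 p.2.1
  refine ⟨G.dist p.1.1 p.2.1, le_antisymm
    (iInf₂_le (f := fun (a : A) (b : B) => (G.dist a.1 b.1 : ℝ≥0∞)) p.1 p.2)
    (le_iInf₂ fun x y => ?_)⟩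
  exact_mod_cast Function.argmin_le (fun p : A × B => G.dist p.1.1 p.2.1) (x, y)

variable {G r α}

lemma admissible_CMP (hα : 0 ≤ α) : Admissible G r α (CMP G r α) := by
  rintro _ ⟨x, rfl⟩ _ ⟨x', rfl⟩ hne
  have hxx' : ¬ CMP G r α x x' := fun h =>
    hne (Set.ext fun z => ⟨fun hz => (CMP G r α).trans hz h,
      fun hz => (CMP G r α).trans hz ((CMP G r α).symm h)⟩)
  -- `CMP` is the infimum of the admissible setoids, so some admissible `s` separates `x, x'`.
  obtain ⟨s, hs, hsxx'⟩ : ∃ s, Admissible G r α s ∧ ¬ s x x' := by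
    by_contra! h
    exact hxx' h
  have hsub : ∀ y, {z | CMP G r α z y} ⊆ {z | s z y} := fun y z hz => hz s hs
  have hsne : {z | s z x} ≠ {z | s z x'} := fun h =>
    hsxx' (show x ∈ {z | s z x'} from h ▸ s.refl x)
  calc (min (wt r {z | CMP G r α z x}) (wt r {z | CMP G r α z x'})) ^ α
      ≤ (min (wt r {z | s z x}) (wt r {z | s z x'})) ^ α :=
        ENNReal.rpow_le_rpow (min_le_min (wt_mono r (hsub x)) (wt_mono r (hsub x'))) hα
    _ < setDist G {z | s z x} {z | s z x'} := hs _ (s.mem_classes x) _ (s.mem_classes x') hsne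
    _ ≤ setDist G {z | CMP G r α z x} {z | CMP G r α z x'} := setDist_anti G (hsub x) (hsub x')

lemma Descends.exists_natCast_btwn (hα : 0 ≤ α) {C C' : Set V} (h : Descends G r α C C') :
    ∃ N : ℕ, wt r C' ^ α < N ∧ (N : ℝ≥0∞) ≤ wt r C ^ α := by
  obtain ⟨hC, hC', hne, hdist⟩ := h
  obtain ⟨N, hN⟩ := setDist_eq_natCast G (Setoid.nonempty_of_mem_partition
    (Setoid.isPartition_classes _) hC) (Setoid.nonempty_of_mem_partition
    (Setoid.isPartition_classes _) hC')
  have hadm := admissible_CMP hα C hC C' hC' hne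
  rw [hN, (ENNReal.monotone_rpow_of_nonneg hα).map_min, min_lt_iff] at hadm
  rw [hN] at hdist
  exact ⟨N, hadm.resolve_left hdist.not_gt, hdist⟩

lemma Descends.efloor_lt (hα : 0 ≤ α) {C C' : Set V} (h : Descends G r α C C') :
    efloor (wt r C' ^ α) < efloor (wt r C ^ α) :=
  let ⟨_, hlt, hle⟩ := h.exists_natCast_btwn hα
  efloor_lt_efloor_of_lt_natCast_le hlt hle

end

theorem CMP_descends_properties_general
    {V : Type*} (G : SimpleGraph V)
    (r : V → ℝ≥0) (α : ℝ) (hα : 1 ≤ α) :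
    (∀ C C' : Set V, Descends G r α C C' →
        efloor ((wt r C') ^ α) < efloor ((wt r C) ^ α)) ∧
    (¬ ∃ c : ℕ → Set V, ∀ n, Descends G r α (c n) (c (n + 1))) ∧
    (∀ (n : ℕ) (c : ℕ → Set V), 0 < n →
        (∀ i < n, Descends G r α (c i) (c (i + 1))) → c 0 ≠ c n) ∧
    (∀ C : Set V, C ∈ (CMP G r α).classes → C.Finite →
        ∀ (n : ℕ) (c : ℕ → Set V), c 0 = C →
          (∀ i < n, Descends G r α (c i) (c (i + 1))) →
          (n : ℕ∞) ≤ efloor ((wt r C) ^ α)) := by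
  have step : ∀ C C' : Set V, Descends G r α C C' →
      efloor (wt r C' ^ α) < efloor (wt r C ^ α) :=
    fun _ _ h => h.efloor_lt (zero_le_one.trans hα)
  refine ⟨step, ?_, ?_, ?_⟩
  · rintro ⟨c, hc⟩
    obtain ⟨n, hn⟩ := WellFounded.not_rel_apply_succ (r := (· < ·))
      fun n => efloor (wt r (c n) ^ α)
    exact hn (step _ _ (hc n))
  · intro n c hn hpath hcycle
    have hanti := strictAntiOn_Iic_of_succ_lt (ψ := fun i => efloor (wt r (c i) ^ α))
      fun i hi => step _ _ (hpath i hi)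
    exact (hanti (Set.mem_Iic.2 n.zero_le) (Set.mem_Iic.2 le_rfl) hn).ne
      (congrArg (fun C => efloor (wt r C ^ α)) hcycle).symm
  · rintro _ - - n c rfl hpath
    exact natCast_le_of_succ_lt fun i hi => step _ _ (hpath i hi)

/-- Properties of the oriented graph `(𝒞, ↦)` on clusters of the CMP:
(i) if `C ↦ C'` then `⌊r(C)^α⌋ > ⌊r(C')^α⌋`;
(ii) there is no infinite oriented path; in particular there is no oriented cycle;
moreover every oriented path starting from a finite cluster `C` has length at most
`⌊r(C)^α⌋`. -/
theorem CMP_descends_properties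
    {V : Type*} (G : SimpleGraph V) (hconn : G.Connected)
    (hlf : ∀ v : V, (G.neighborSet v).Finite)
    (r : V → ℝ≥0) (α : ℝ) (hα : 1 ≤ α) :
    (∀ C C' : Set V, Descends G r α C C' →
        efloor ((wt r C') ^ α) < efloor ((wt r C) ^ α)) ∧
    (¬ ∃ c : ℕ → Set V, ∀ n, Descends G r α (c n) (c (n + 1))) ∧
    (∀ (n : ℕ) (c : ℕ → Set V), 0 < n →
        (∀ i < n, Descends G r α (c i) (c (i + 1))) → c 0 ≠ c n) ∧
    (∀ C : Set V, C ∈ (CMP G r α).classes → C.Finite →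
        ∀ (n : ℕ) (c : ℕ → Set V), c 0 = C →
          (∀ i < n, Descends G r α (c i) (c (i + 1))) →
          (n : ℕ∞) ≤ efloor ((wt r C) ^ α)) :=
  CMP_descends_properties_general G r α hα

end CMPPaper
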